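/- arXiv:1412.2918 — 6 statements merged into one kernel-verified Lean document; each statement's English description precedes it below -/
import Mathlib

section
/- For every integer n with 3 ≤ n ≤ 7, the subgroup Γ₀ of Γ = O⁺(ℤ^{n,1}) generated by the reflections s_{α₀}, s_{α₁}, …, s_{α_{n−1}} in the long simple roots α₀ = e₀ − e₁ − e₂ − e₃ and α_i = e_i − e_{i+1} for 1 ≤ i ≤ n−1 intersects the principal congruence subgroup Γ(2) trivially: Γ₀ ∩ Γ(2) = {1}. -/
open scoped BigOperators

/-- The lattice `ℤ^{n,1}`: `ℤ^{n+1}` as an abelian group. -/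
abbrev LVec (n : ℕ) : Type := Fin (n + 1) → ℤ

/-- The standard basis vectors `e₀, …, eₙ` of `ℤ^{n,1}`. -/
def evec {n : ℕ} (i : Fin (n + 1)) : LVec n := Pi.single i 1

/-- The Lorentzian bilinear form `⟨x,y⟩ = -x₀y₀ + x₁y₁ + ⋯ + xₙyₙ` on `ℤ^{n,1}`. -/
def B {n : ℕ} (x y : LVec n) : ℤ :=
  ∑ i : Fin (n + 1), (if i = 0 then -1 else 1) * x i * y i

lemma B_comm {n : ℕ} (x y : LVec n) : B x y = B y x := by
  unfold B; exact Finset.sum_congr rfl fun i _ => by ring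

lemma B_add_left {n : ℕ} (x y z : LVec n) : B (x + y) z = B x z + B y z := by
  unfold B
  rw [← Finset.sum_add_distrib]
  exact Finset.sum_congr rfl fun i _ => by by_cases h : i = 0 <;> simp [h, Pi.add_apply] <;> ring

lemma B_smul_left {n : ℕ} (c : ℤ) (x z : LVec n) : B (c • x) z = c * B x z := by
  unfold B
  rw [Finset.mul_sum]
  exact Finset.sum_congr rfl fun i _ => by by_cases h : i = 0 <;> simp [h, Pi.smul_apply] <;> ring

lemma B_neg_left {n : ℕ} (x z : LVec n) : B (-x) z = -B x z := by
  have := B_smul_left (n := n) (-1) x z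
  simpa using this

lemma B_sub_left {n : ℕ} (x y z : LVec n) : B (x - y) z = B x z - B y z := by
  rw [sub_eq_add_neg, B_add_left, B_neg_left, sub_eq_add_neg]

lemma B_add_right {n : ℕ} (x y z : LVec n) : B x (y + z) = B x y + B x z := by
  rw [B_comm, B_add_left, B_comm y x, B_comm z x]

lemma B_smul_right {n : ℕ} (c : ℤ) (x z : LVec n) : B x (c • z) = c * B x z := by
  rw [B_comm, B_smul_left, B_comm]

lemma B_sub_right {n : ℕ} (x y z : LVec n) : B x (y - z) = B x y - B x z := by
  rw [B_comm, B_sub_left, B_comm y x, B_comm z x]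

lemma B_eq {n : ℕ} (x y : LVec n) :
    B x y = -(x 0 * y 0) + ∑ i ∈ Finset.univ.erase 0, x i * y i := by
  unfold B
  rw [← Finset.add_sum_erase _ _ (Finset.mem_univ (0 : Fin (n + 1)))]
  congr 1
  · simp
  · exact Finset.sum_congr rfl fun i hi => by
      rw [if_neg (Finset.ne_of_mem_erase hi), one_mul]

lemma B_evec_zero_right {n : ℕ} (x : LVec n) : B x (evec 0) = -(x 0) := by
  rw [B_eq]
  have h1 : ∑ i ∈ Finset.univ.erase (0 : Fin (n+1)), x i * evec 0 i = 0 := by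
    apply Finset.sum_eq_zero
    intro i hi
    have : evec (0 : Fin (n+1)) i = 0 := Pi.single_eq_of_ne (Finset.ne_of_mem_erase hi) 1
    rw [this, mul_zero]
  rw [h1]
  simp [evec, Pi.single_eq_same]

lemma B_evec_zero_self {n : ℕ} : B (evec (0 : Fin (n+1))) (evec 0) = -1 := by
  rw [B_evec_zero_right]
  simp [evec, Pi.single_eq_same]

/-- Cauchy-Schwarz consequence: two forward vectors of norm `-1` have negative inner product. -/
lemma B_neg_of_forward {n : ℕ} (x y : LVec n) (hx : B x x = -1) (hy : B y y = -1)
    (hx0 : 0 < x 0) (hy0 : 0 < y 0) : B x y < 0 := by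
  have hx' := B_eq x x
  have hy' := B_eq y y
  have hxy := B_eq x y
  set Sx := ∑ i ∈ Finset.univ.erase (0 : Fin (n+1)), x i * x i with hSx
  set Sy := ∑ i ∈ Finset.univ.erase (0 : Fin (n+1)), y i * y i with hSy
  set S := ∑ i ∈ Finset.univ.erase (0 : Fin (n+1)), x i * y i with hS
  have hCS : S ^ 2 ≤ Sx * Sy := by
    have := Finset.sum_mul_sq_le_sq_mul_sq (Finset.univ.erase (0 : Fin (n+1))) x y
    simpa [hSx, hSy, hS, sq] using this
  have hSx' : Sx = x 0 * x 0 - 1 := by linarith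
  have hSy' : Sy = y 0 * y 0 - 1 := by linarith
  have hbound : S ^ 2 < (x 0 * y 0) ^ 2 := by
    rw [hSx', hSy'] at hCS
    nlinarith
  have hpos : 0 < x 0 * y 0 := mul_pos hx0 hy0
  have : S < x 0 * y 0 := by nlinarith
  rw [hxy]
  linarith

lemma forward_ne_zero {n : ℕ} (y : LVec n) (hy : B y y = -1) : y 0 ≠ 0 := by
  have hy' := B_eq y y
  have hnn : 0 ≤ ∑ i ∈ Finset.univ.erase (0 : Fin (n+1)), y i * y i :=
    Finset.sum_nonneg fun i _ => mul_self_nonneg _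
  intro h0
  rw [h0] at hy'
  linarith

lemma forward_of_B_neg {n : ℕ} (x y : LVec n) (hx : B x x = -1) (hy : B y y = -1)
    (hx0 : 0 < x 0) (hxy : B x y < 0) : 0 < y 0 := by
  rcases lt_trichotomy (y 0) 0 with h | h | h
  · exfalso
    have hny : B (-y) (-y) = -1 := by
      rw [B_neg_left, B_comm, B_neg_left, B_comm]; simpa using hy
    have hny0 : 0 < (-y) 0 := by simpa using h
    have := B_neg_of_forward x (-y) hx hny hx0 hny0
    rw [B_comm, B_neg_left, B_comm] at this
    linarith
  · exact absurd h (forward_ne_zero y hy)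
  · exact h

/-- The group `Γ = O⁺(ℤ^{n,1})` of integral linear automorphisms preserving the
Lorentzian form and the forward cone. -/
def Gamma (n : ℕ) : Subgroup ((LVec n) ≃ₗ[ℤ] (LVec n)) where
  carrier := { g | (∀ x y, B (g x) (g y) = B x y) ∧ B (g (evec 0)) (evec 0) < 0 }
  one_mem' := by
    refine ⟨fun x y => rfl, ?_⟩
    show B (evec 0) (evec 0) < 0
    rw [B_evec_zero_self]
    norm_num
  mul_mem' := by
    rintro a b ⟨ha1, ha2⟩ ⟨hb1, hb2⟩
    have hmul : ∀ v : LVec n, (a * b) v = a (b v) := fun v => rfl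
    refine ⟨fun x y => by rw [hmul, hmul, ha1, hb1], ?_⟩
    rw [hmul]
    set v := b (evec 0) with hv
    have hvnorm : B v v = -1 := by rw [hb1]; exact B_evec_zero_self
    have hv0 : 0 < v 0 := by
      rw [B_evec_zero_right] at hb2; omega
    have hae0 : B (a (evec 0)) (a (evec 0)) = -1 := by rw [ha1]; exact B_evec_zero_self
    have hae00 : 0 < (a (evec 0)) 0 := by
      rw [B_evec_zero_right] at ha2; omega
    have havnorm : B (a v) (a v) = -1 := by rw [ha1]; exact hvnorm
    have hinner : B (a (evec 0)) (a v) < 0 := by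
      rw [ha1, B_comm, B_evec_zero_right]; omega
    have := forward_of_B_neg (a (evec 0)) (a v) hae0 havnorm hae00 hinner
    rw [B_evec_zero_right]; omega
  inv_mem' := by
    rintro a ⟨ha1, ha2⟩
    have hinv : ∀ v : LVec n, a (a⁻¹ v) = v := fun v => a.apply_symm_apply v
    have hform : ∀ x y, B (a⁻¹ x) (a⁻¹ y) = B x y := by
      intro x y
      have := ha1 (a⁻¹ x) (a⁻¹ y)
      rw [hinv, hinv] at this
      exact this.symm
    refine ⟨hform, ?_⟩
    set w := a⁻¹ (evec 0) with hw
    have hwnorm : B w w = -1 := by rw [hform]; exact B_evec_zero_self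
    have hinner : B (evec 0) w < 0 := by
      have h1 : B (a (evec 0)) (a w) = B (evec 0) w := ha1 (evec 0) w
      have h2 : a w = evec 0 := hinv (evec 0)
      rw [h2] at h1
      rw [← h1]
      exact ha2
    have he0 : B (evec (0 : Fin (n+1))) (evec 0) = -1 := B_evec_zero_self
    have he00 : 0 < (evec (0 : Fin (n+1))) 0 := by simp [evec, Pi.single_eq_same]
    have := forward_of_B_neg (evec 0) w he0 hwnorm he00 hinner
    rw [B_evec_zero_right]; omega

/-- The principal congruence subgroup `Γ(m)` of `Γ = O⁺(ℤ^{n,1})`: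
elements congruent to the identity modulo `m`. -/
def GammaCong (n m : ℕ) : Subgroup (Gamma n) where
  carrier := { g | ∀ (v : LVec n) (i : Fin (n + 1)),
      (m : ℤ) ∣ ((g : (LVec n) ≃ₗ[ℤ] (LVec n)) v i - v i) }
  one_mem' := by intro v i; simp
  mul_mem' := by
    intro a b ha hb v i
    have : ((a * b : Gamma n) : (LVec n) ≃ₗ[ℤ] (LVec n)) v
        = (a : (LVec n) ≃ₗ[ℤ] (LVec n)) ((b : (LVec n) ≃ₗ[ℤ] (LVec n)) v) := rfl
    rw [this]
    have h1 := ha ((b : (LVec n) ≃ₗ[ℤ] (LVec n)) v) i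
    have h2 := hb v i
    have heq : (a : (LVec n) ≃ₗ[ℤ] (LVec n)) ((b : (LVec n) ≃ₗ[ℤ] (LVec n)) v) i - v i
        = ((a : (LVec n) ≃ₗ[ℤ] (LVec n)) ((b : (LVec n) ≃ₗ[ℤ] (LVec n)) v) i
            - (b : (LVec n) ≃ₗ[ℤ] (LVec n)) v i)
          + ((b : (LVec n) ≃ₗ[ℤ] (LVec n)) v i - v i) := by ring
    rw [heq]
    exact dvd_add h1 h2
  inv_mem' := by
    intro a ha v i
    set w := ((a⁻¹ : Gamma n) : (LVec n) ≃ₗ[ℤ] (LVec n)) v with hw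
    have hww : (a : (LVec n) ≃ₗ[ℤ] (LVec n)) w = v := by
      rw [hw]
      exact (a : (LVec n) ≃ₗ[ℤ] (LVec n)).apply_symm_apply v
    have := ha w i
    rw [hww] at this
    exact (dvd_sub_comm).mp this

instance GammaCong_normal (n m : ℕ) : (GammaCong n m).Normal := by
  constructor
  intro g hg h v i
  set hE := (h : (LVec n) ≃ₗ[ℤ] (LVec n)) with hhE
  set gE := (g : (LVec n) ≃ₗ[ℤ] (LVec n)) with hgE
  have happ : ((h * g * h⁻¹ : Gamma n) : (LVec n) ≃ₗ[ℤ] (LVec n)) v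
      = hE (gE (hE.symm v)) := rfl
  rw [happ]
  set w := hE.symm v with hwdef
  have hv : hE w = v := hE.apply_symm_apply v
  obtain ⟨u, hu⟩ : ∃ u : LVec n, gE w - w = (m : ℤ) • u := by
    refine ⟨fun j => (gE w j - w j) / m, ?_⟩
    funext j
    have hj := hg w j
    simp only [Pi.sub_apply, Pi.smul_apply, smul_eq_mul]
    exact (Int.mul_ediv_cancel' hj).symm
  have key : hE (gE w) - v = (m : ℤ) • hE u := by
    rw [← hv, ← map_sub, hu, map_smul]
  have hcomp : hE (gE w) i - v i = (m : ℤ) * (hE u i) := by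
    have := congrFun key i
    simpa using this
  rw [hcomp]
  exact dvd_mul_right _ _

/-- The reflection `s_α(v) = v - 2⟨v,α⟩α` in a norm one root `α`, as a linear map. -/
def reflMap {n : ℕ} (α : LVec n) : LVec n →ₗ[ℤ] LVec n where
  toFun v := v - (2 * B v α) • α
  map_add' x y := by
    show (x + y) - (2 * B (x + y) α) • α
        = (x - (2 * B x α) • α) + (y - (2 * B y α) • α)
    rw [B_add_left, mul_add, add_smul]
    abel
  map_smul' c x := by
    show (c • x) - (2 * B (c • x) α) • α = c • (x - (2 * B x α) • α)
    rw [B_smul_left, smul_sub, smul_smul,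
      show (2 : ℤ) * (c * B x α) = c * (2 * B x α) by ring]

lemma reflMap_apply {n : ℕ} (α : LVec n) (v : LVec n) :
    reflMap α v = v - (2 * B v α) • α := rfl

lemma reflMap_invol {n : ℕ} (α : LVec n) (hα : B α α = 1) (v : LVec n) :
    reflMap α (reflMap α v) = v := by
  rw [reflMap_apply, reflMap_apply, B_sub_left, B_smul_left, hα, mul_one,
    show 2 * (B v α - 2 * B v α) = -(2 * B v α) by ring, neg_smul]
  abel

/-- The reflection in a norm one root, as a linear automorphism. -/
def srefl {n : ℕ} (α : LVec n) (hα : B α α = 1) : (LVec n) ≃ₗ[ℤ] (LVec n) :=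
  LinearEquiv.ofLinear (reflMap α) (reflMap α)
    (LinearMap.ext fun v => reflMap_invol α hα v)
    (LinearMap.ext fun v => reflMap_invol α hα v)

lemma srefl_apply {n : ℕ} (α : LVec n) (hα : B α α = 1) (v : LVec n) :
    srefl α hα v = v - (2 * B v α) • α := rfl

lemma srefl_form {n : ℕ} (α : LVec n) (hα : B α α = 1) (x y : LVec n) :
    B (srefl α hα x) (srefl α hα y) = B x y := by
  rw [srefl_apply, srefl_apply, B_sub_left, B_sub_right, B_sub_right,
    B_smul_left, B_smul_right, B_smul_right, B_smul_left, hα, B_comm y α]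
  ring

lemma srefl_mem {n : ℕ} (α : LVec n) (hα : B α α = 1) : srefl α hα ∈ Gamma n := by
  refine ⟨srefl_form α hα, ?_⟩
  rw [srefl_apply, B_sub_left, B_smul_left, B_evec_zero_self, B_comm]
  nlinarith [sq_nonneg (B α (evec (0 : Fin (n+1))))]

/-- The reflection in a norm one root, as an element of `Γ = O⁺(ℤ^{n,1})`. -/
def sG {n : ℕ} (α : LVec n) (hα : B α α = 1) : Gamma n := ⟨srefl α hα, srefl_mem α hα⟩

open Fin.NatCast in
/-- The long simple roots `α₀ = e₀ - e₁ - e₂ - e₃` and `αᵢ = eᵢ - eᵢ₊₁` for `1 ≤ i ≤ n-1`. -/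
def longRoot (n : ℕ) (i : ℕ) : LVec n :=
  if i = 0 then evec 0 - evec 1 - evec 2 - evec 3
  else evec (i : Fin (n + 1)) - evec ((i + 1 : ℕ) : Fin (n + 1))

/-- The subgroup `Γ₀` of `Γ = O⁺(ℤ^{n,1})` generated by the reflections
`s_{α₀}, …, s_{α_{n-1}}` in the long simple roots. -/
def Gamma0 (n : ℕ) : Subgroup (Gamma n) :=
  Subgroup.closure { g | ∃ i : ℕ, i < n ∧
    ∀ v : LVec n, (g : (LVec n) ≃ₗ[ℤ] (LVec n)) v = v - (B v (longRoot n i)) • longRoot n i }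

/-! The vector `k = -3e₀ + e₁ + ⋯ + eₙ` is orthogonal to every long simple root, so `Γ₀` fixes
`k`. Let `g ∈ Γ(2)` fix `k`, and write `g eᵢ = eᵢ + 2w` for `i ≠ 0`. Since `g` preserves
`⟨eᵢ, eᵢ⟩ = 1` and `⟨eᵢ, k⟩`, we get `⟨eᵢ, w⟩ + ⟨w, w⟩ = 0` and `⟨w, k⟩ = 0`; for `n ≤ 7`,
Cauchy–Schwarz on the `n - 1 ≤ 6` coordinates of `w` other than `w₀, wᵢ`, together with
`-x ≤ x²` on `ℤ`, forces `w = 0`. Finally `3e₀ = e₁ + ⋯ + eₙ - k` is fixed as well, so `g = 1`. -/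

def kvec (n : ℕ) : LVec n := fun j => if j = 0 then -3 else 1

lemma B_evec_left {n : ℕ} (j : Fin (n + 1)) (x : LVec n) :
    B (evec j) x = (if j = 0 then -1 else 1) * x j := by
  rw [B, Finset.sum_eq_single j (fun i _ hij => by simp [evec, hij]) (by simp)]
  simp [evec]

lemma B_evec_kvec {n : ℕ} (j : Fin (n + 1)) : B (evec j) (kvec n) = if j = 0 then 3 else 1 := by
  rw [B_evec_left, kvec]
  split_ifs <;> norm_num

lemma B_kvec_right {n : ℕ} (x : LVec n) :
    B x (kvec n) = 3 * x 0 + ∑ j ∈ Finset.univ.erase 0, x j := by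
  rw [B_eq, Finset.sum_congr rfl fun j hj => by
    rw [kvec, if_neg (Finset.ne_of_mem_erase hj), mul_one]]
  simp [kvec, mul_comm]

open Fin.NatCast in
lemma B_longRoot_kvec {n : ℕ} (hn : 3 ≤ n) {i : ℕ} (hi : i < n) :
    B (longRoot n i) (kvec n) = 0 := by
  have hne : ∀ m : ℕ, 0 < m → m ≤ n → (m : Fin (n + 1)) ≠ 0 := fun m h0 h hc => by
    simp [Fin.ext_iff, Nat.mod_eq_of_lt (Nat.lt_succ_of_le h), h0.ne'] at hc
  unfold longRoot
  split_ifs with h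
  · have := hne 1 (by omega) (by omega)
    have := hne 2 (by omega) (by omega)
    have := hne 3 (by omega) (by omega)
    simp_all [B_sub_left, B_evec_kvec]
  · rw [B_sub_left, B_evec_kvec, B_evec_kvec, if_neg (hne i (by omega) (by omega)),
      if_neg (hne (i + 1) (by omega) (by omega)), sub_self]

lemma gamma0_le_stabilizer_kvec {n : ℕ} (hn : 3 ≤ n) :
    Gamma0 n ≤ MulAction.stabilizer (Gamma n) (kvec n) := by
  refine Subgroup.closure_le _ |>.2 ?_
  rintro g ⟨i, hi, hg⟩
  show (g : LVec n ≃ₗ[ℤ] LVec n) (kvec n) = kvec n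
  rw [hg, B_comm, B_longRoot_kvec hn hi, zero_smul, sub_zero]

lemma eq_zero_of_sq_le_of_le {a t : ℤ} (hsq : (3 * a + t) ^ 2 ≤ 6 * (a ^ 2 - t - t ^ 2))
    (hle : 3 * a + t ≤ a ^ 2 - t - t ^ 2) : a = 0 ∧ t = 0 := by
  have ht : t = 0 ∨ t = -1 := by
    have : t * (2 * t + 3) ≤ 0 := by nlinarith [sq_nonneg (a + t)]
    have : -2 < t := by nlinarith
    have : t ≤ 0 := by nlinarith
    omega
  rcases ht with rfl | rfl
  · exact ⟨by nlinarith, rfl⟩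
  · obtain rfl : a = 1 := by nlinarith [sq_nonneg (a - 1)]
    norm_num at hle

lemma eq_zero_of_B_kvec_eq_zero {n : ℕ} (hn : n ≤ 7) {w : LVec n} {i : Fin (n + 1)} (hi : i ≠ 0)
    (hk : B w (kvec n) = 0) (hnorm : B (evec i) w + B w w = 0) : w = 0 := by
  set s := (Finset.univ.erase (0 : Fin (n + 1))).erase i
  have hsplit (f : LVec n) : ∑ j ∈ Finset.univ.erase 0, f j = f i + ∑ j ∈ s, f j :=
    (Finset.add_sum_erase _ _ (by simpa using hi)).symm
  have hsum : ∑ j ∈ s, w j = -3 * w 0 - w i := by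
    rw [B_kvec_right, hsplit] at hk
    linarith
  have hsumsq : ∑ j ∈ s, w j ^ 2 = w 0 ^ 2 - w i - w i ^ 2 := by
    rw [B_evec_left, if_neg hi, B_eq, hsplit] at hnorm
    simp only [sq]
    linarith
  have hcard : s.card ≤ 6 := by
    simp [s, Finset.card_erase_of_mem, hi]
    omega
  have hCS : (∑ j ∈ s, w j) ^ 2 ≤ 6 * ∑ j ∈ s, w j ^ 2 :=
    sq_sum_le_card_mul_sum_sq.trans <| mul_le_mul_of_nonneg_right (by exact_mod_cast hcard)
      (Finset.sum_nonneg fun j _ => sq_nonneg _)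
  have hle : -∑ j ∈ s, w j ≤ ∑ j ∈ s, w j ^ 2 := by
    rw [← Finset.sum_neg_distrib]
    exact Finset.sum_le_sum fun j _ => (Int.le_self_sq _).trans_eq (neg_sq _)
  rw [hsum, hsumsq] at hCS hle
  obtain ⟨h0, hi0⟩ := eq_zero_of_sq_le_of_le (a := w 0) (t := w i) (by linarith) (by linarith)
  have hs : ∀ j ∈ s, w j = 0 := fun j hj =>
    pow_eq_zero_iff two_ne_zero |>.1 <| (Finset.sum_eq_zero_iff_of_nonneg fun j _ =>
      sq_nonneg (w j)).1 (by simp [hsumsq, h0, hi0]) j hj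
  funext j
  by_cases hj0 : j = 0
  · rw [hj0, h0]; rfl
  by_cases hji : j = i
  · rw [hji, hi0]; rfl
  exact hs j (by simp [s, hj0, hji])

lemma map_evec_eq_self_of_mem_gammaCong_two {n : ℕ} (hn : n ≤ 7) {g : Gamma n}
    (hk : g ∈ MulAction.stabilizer (Gamma n) (kvec n)) (h2 : g ∈ GammaCong n 2)
    {i : Fin (n + 1)} (hi : i ≠ 0) : (g : LVec n ≃ₗ[ℤ] LVec n) (evec i) = evec i := by
  obtain ⟨hB, -⟩ := g.2
  choose w hw using h2 (evec i)
  have hgw : (g : LVec n ≃ₗ[ℤ] LVec n) (evec i) = evec i + (2 : ℤ) • w := by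
    funext j
    have := hw j
    push_cast at this
    simp only [Pi.add_apply, Pi.smul_apply, smul_eq_mul]
    linarith
  have hii : B (evec i) (evec i) = 1 := by
    rw [B_evec_left, if_neg hi, one_mul]
    simp [evec]
  have hnorm : B (evec i) w + B w w = 0 := by
    have := hB (evec i) (evec i)
    rw [hgw, hii, B_add_left, B_add_right, B_add_right, B_smul_left, B_smul_right,
      B_smul_left, B_smul_right, hii, B_comm w (evec i)] at this
    linarith
  have hwk : B w (kvec n) = 0 := by
    have := hB (evec i) (kvec n)
    rw [show (g : LVec n ≃ₗ[ℤ] LVec n) (kvec n) = kvec n from hk, hgw, B_add_left,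
      B_smul_left] at this
    linarith
  rw [hgw, eq_zero_of_B_kvec_eq_zero hn hi hwk hnorm, smul_zero, add_zero]

lemma three_smul_evec_zero {n : ℕ} :
    (3 : ℤ) • evec (0 : Fin (n + 1)) = ∑ j ∈ Finset.univ.erase 0, evec j - kvec n := by
  funext j
  by_cases hj : j = 0
  · subst hj
    simp [evec, kvec, Finset.sum_apply, Pi.single_apply]
  · simp [evec, kvec, Finset.sum_apply, Pi.single_apply, hj, Finset.sum_ite_eq]

lemma eq_one_of_map_kvec_of_map_evec {n : ℕ} {g : LVec n ≃ₗ[ℤ] LVec n}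
    (hk : g (kvec n) = kvec n) (he : ∀ i ≠ 0, g (evec i) = evec i) : g = 1 := by
  have he0 : g (evec 0) = evec 0 := by
    apply smul_right_injective (LVec n) (three_ne_zero (α := ℤ))
    simp only [← map_zsmul, three_smul_evec_zero, map_sub, map_sum, hk]
    exact congrArg (· - kvec n) (Finset.sum_congr rfl fun j hj => he j (Finset.ne_of_mem_erase hj))
  refine (Pi.basisFun ℤ (Fin (n + 1))).ext' fun i => ?_
  rw [Pi.basisFun_apply]
  by_cases hi : i = 0
  · subst hi
    exact he0
  · exact he i hi

/-- For `3 ≤ n ≤ 7` the finite Coxeter group `Γ₀` generated by the reflections in the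
long simple roots meets the principal congruence subgroup `Γ(2)` trivially. -/
theorem gamma0_inf_gammaCong_two_eq_bot (n : ℕ) (hn : 3 ≤ n) (hn' : n ≤ 7) :
    Gamma0 n ⊓ GammaCong n 2 = ⊥ := by
  refine eq_bot_iff.2 fun g ⟨hg0, hg2⟩ => Subgroup.mem_bot.2 <| Subtype.ext ?_
  have hk := gamma0_le_stabilizer_kvec hn hg0
  exact eq_one_of_map_kvec_of_map_evec hk fun i hi =>
    map_evec_eq_self_of_mem_gammaCong_two hn' hk hg2 hi
end

section
/- For n = 8, the subgroup Γ₀ of Γ = O⁺(ℤ^{8,1}) generated by the reflections s_{α₀}, s_{α₁}, …, s_{α₇} in the long simple roots α₀ = e₀ − e₁ − e₂ − e₃ and α_i = e_i − e_{i+1} for 1 ≤ i ≤ 7 intersects the principal congruence subgroup Γ(2) in a subgroup of order exactly 2. -/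
open scoped BigOperators

/-!
The vector `w = (-3, 1, …, 1)` has norm `-1` and is orthogonal to all long simple roots, so `Γ₀`
fixes `w` and acts on `w^⊥`, the `E₈` lattice: positive definite because `w` is timelike, and
even because every coordinate of `w` is odd. For `g ∈ Γ₀ ∩ Γ(2)` and a simple root `α`, `gα` is a
root of `w^⊥` congruent to `α` mod `2`; writing `gα = α + 2u`, the norms of `u` and `α + u` are
even, nonnegative and add up to `2`, so one of them vanishes and `gα = ±α`. As `g` preserves
`⟨αᵢ, αⱼ⟩ = -1` along the edges of the connected `E₈` diagram, the sign is the same for all simple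
roots, and since only `0` is orthogonal to `w` and all `αᵢ`, `g` is `1` or the element acting as
`-1` on `w^⊥`. The latter is `c ^ 15` for a Coxeter element `c`, and it is `v ↦ -v - 2⟨v,w⟩w`,
which is the identity mod `2`.
-/

section Lorentzian

variable {n : ℕ}

theorem B_self_pos_of_B_eq_zero {w x : LVec n} (hw : B w w < 0) (hxw : B x w = 0)
    (hx : x ≠ 0) : 0 < B x x := by
  have hxx := B_eq x x
  have hww := B_eq w w
  have hxw' := B_eq x w
  set s := Finset.univ.erase (0 : Fin (n + 1))
  have hcs := Finset.sum_mul_sq_le_sq_mul_sq s x w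
  simp only [sq] at hcs
  have hws : 0 ≤ ∑ i ∈ s, w i * w i := Finset.sum_nonneg fun i _ => mul_self_nonneg _
  have hw0 : 0 < w 0 * w 0 := by linarith
  rcases (Finset.sum_nonneg fun i _ => mul_self_nonneg (x i) :
      0 ≤ ∑ i ∈ s, x i * x i).eq_or_lt with hxs | hxs
  · have hxi : ∀ i ∈ s, x i = 0 := fun i hi => mul_self_eq_zero.mp
      ((Finset.sum_eq_zero_iff_of_nonneg fun i _ => mul_self_nonneg (x i)).mp hxs.symm i hi)
    have hx0 : x 0 = 0 := by
      rw [Finset.sum_eq_zero fun i hi => by rw [hxi i hi, zero_mul]] at hxw'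
      have : x 0 * w 0 = 0 := by linarith
      exact (mul_eq_zero.mp this).resolve_right fun h => by simp [h] at hw0
    refine absurd (funext fun i => ?_) hx
    by_cases hi : i = 0
    · rw [hi, hx0]; rfl
    · exact hxi i (Finset.mem_erase.mpr ⟨hi, Finset.mem_univ i⟩)
  · have hS : ∑ i ∈ s, x i * w i = x 0 * w 0 := by linarith
    rw [hS] at hcs
    have : (x 0 * x 0) * (w 0 * w 0) < (∑ i ∈ s, x i * x i) * (w 0 * w 0) := by
      nlinarith [mul_lt_mul_of_pos_left (show ∑ i ∈ s, w i * w i < w 0 * w 0 by linarith) hxs]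
    nlinarith [lt_of_mul_lt_mul_right this hw0.le]

theorem two_dvd_B_self_sub_B_of_odd {w : LVec n} (hw : ∀ i, Odd (w i)) (x : LVec n) :
    2 ∣ B x x - B x w := by
  unfold B
  rw [← Finset.sum_sub_distrib]
  refine Finset.dvd_sum fun i _ => ?_
  obtain ⟨k, hk⟩ := hw i
  obtain ⟨m, hm⟩ := Int.even_mul_succ_self (x i)
  exact ⟨(if i = 0 then -1 else 1) * (m - x i - x i * k), by
    rw [hk]; linear_combination (if i = 0 then -1 else 1) * hm⟩

theorem B_neg_right (x y : LVec n) : B x (-y) = -B x y := by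
  rw [B_comm, B_neg_left, B_comm]

theorem eq_or_eq_neg_of_two_dvd_sub {w α β : LVec n} (hw : B w w < 0) (hw_odd : ∀ i, Odd (w i))
    (hα : B α α = 2) (hβ : B β β = 2) (hαw : B α w = 0) (hβw : B β w = 0)
    (hαβ : ∀ i, 2 ∣ β i - α i) : β = α ∨ β = -α := by
  choose u hu using hαβ
  obtain rfl : β = α + (2 : ℤ) • u := funext fun i => by
    simp only [Pi.add_apply, Pi.smul_apply, smul_eq_mul]; linarith [hu i]
  have huw : B u w = 0 := by
    rw [B_add_left, B_smul_left, hαw] at hβw; linarith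
  have hvw : B (α + u) w = 0 := by rw [B_add_left, hαw, huw, add_zero]
  have hsum : B u u + B (α + u) (α + u) = 2 := by
    simp only [B_add_left, B_add_right, B_smul_left, B_smul_right, B_comm u α] at hβ ⊢
    linarith
  have hnorm : ∀ x, B x w = 0 → x = 0 ∨ 2 ≤ B x x := fun x hxw => by
    refine or_iff_not_imp_left.mpr fun hx => ?_
    have hpos := B_self_pos_of_B_eq_zero hw hxw hx
    obtain ⟨k, hk⟩ := two_dvd_B_self_sub_B_of_odd hw_odd x
    omega
  rcases hnorm u huw with rfl | hu2
  · left; simp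
  rcases hnorm (α + u) hvw with hαu | hαu2
  · right
    rw [eq_neg_of_add_eq_zero_right hαu]
    module
  · linarith

theorem Gamma.ext_of_eqOn {g h : Gamma n} {S : Set (LVec n)}
    (hS : ∀ u, (∀ s ∈ S, B u s = 0) → u = 0)
    (hgh : Set.EqOn (g : LVec n ≃ₗ[ℤ] LVec n) h S) : g = h := by
  refine Subtype.ext (LinearEquiv.ext fun v => ?_)
  set G : LVec n ≃ₗ[ℤ] LVec n := g.1
  have hB : ∀ s ∈ S, B (G.symm (h.1 v)) s = B v s := fun s hs => by
    rw [← g.2.1, G.apply_symm_apply, hgh hs, h.2.1]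
  have := hS (G.symm (h.1 v) - v) fun s hs => by rw [B_sub_left, hB s hs, sub_self]
  exact (G.symm_apply_eq.mp (sub_eq_zero.mp this)).symm

def Bform (n : ℕ) : LinearMap.BilinForm ℤ (LVec n) :=
  LinearMap.mk₂ ℤ B B_add_left B_smul_left B_add_right B_smul_right

def rootReflection (α : LVec n) (hα : B α α = 2) : LVec n ≃ₗ[ℤ] LVec n :=
  Module.reflection (x := α) (f := (Bform n).flip α) hα

theorem rootReflection_apply {α : LVec n} (hα : B α α = 2) (v : LVec n) :
    rootReflection α hα v = v - B v α • α :=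
  Module.reflection_apply _ _

theorem rootReflection_mem_Gamma {α : LVec n} (hα : B α α = 2) :
    rootReflection α hα ∈ Gamma n := by
  refine ⟨fun x y => ?_, ?_⟩
  · simp only [rootReflection_apply, B_sub_left, B_sub_right, B_smul_left, B_smul_right, hα,
      B_comm y α]
    ring
  · rw [rootReflection_apply, B_sub_left, B_smul_left, B_evec_zero_self, B_comm α]
    nlinarith [sq_nonneg (B (evec 0) α)]

theorem Gamma0_le_stabilizer {w : LVec n} (hw : ∀ i < n, B w (longRoot n i) = 0) :
    Gamma0 n ≤ MulAction.stabilizer (Gamma n) w := by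
  refine (Subgroup.closure_le _).mpr ?_
  rintro g ⟨i, hi, hg⟩
  show g.1 w = w
  rw [hg, hw i hi, zero_smul, sub_zero]

theorem Gamma.units_eq_of_apply_eq_smul {g : Gamma n} {x y : LVec n} {ε δ : ℤˣ}
    (hx : g.1 x = ε • x) (hy : g.1 y = δ • y) (hxy : B x y ≠ 0) : δ = ε := by
  have h := g.2.1 x y
  rw [hx, hy, Units.smul_def, Units.smul_def, B_smul_left, B_smul_right, ← mul_assoc] at h
  have hεδ : ε * δ = 1 :=
    Units.ext (by simpa using mul_right_cancel₀ hxy (h.trans (one_mul _).symm))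
  rw [eq_inv_of_mul_eq_one_right hεδ, Int.units_inv_eq_self]

end Lorentzian

section E8

def e8Normal : LVec 8 := fun i => if i = 0 then -3 else 1

theorem B_e8Normal_self : B e8Normal e8Normal = -1 := by decide

theorem odd_e8Normal (i : Fin 9) : Odd (e8Normal i) := by
  unfold e8Normal; split_ifs <;> decide

theorem B_e8Normal_longRoot : ∀ i < 8, B e8Normal (longRoot 8 i) = 0 := by decide

theorem B_longRoot_e8Normal (i : Fin 8) : B (longRoot 8 i) e8Normal = 0 := by
  rw [B_comm]; exact B_e8Normal_longRoot i i.2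

theorem B_longRoot_self : ∀ i : Fin 8, B (longRoot 8 i) (longRoot 8 i) = 2 := by decide

theorem eq_zero_of_B_e8Normal_of_B_longRoot {u : LVec 8} (hw : B u e8Normal = 0)
    (hα : ∀ i : Fin 8, B u (longRoot 8 i) = 0) : u = 0 := by
  simp +decide [Fin.forall_fin_succ, B, Fin.sum_univ_succ, longRoot, evec, Pi.single_apply,
    e8Normal] at hw hα
  funext i
  fin_cases i <;> simp <;> omega

theorem Gamma.ext_e8 {g h : Gamma 8} (hw : g.1 e8Normal = h.1 e8Normal)
    (hα : ∀ i : Fin 8, g.1 (longRoot 8 i) = h.1 (longRoot 8 i)) : g = h := by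
  refine Gamma.ext_of_eqOn (S := insert e8Normal (Set.range fun i : Fin 8 => longRoot 8 i))
    (fun u hu => ?_) ?_
  · simp only [Set.forall_mem_insert, Set.forall_mem_range] at hu
    exact eq_zero_of_B_e8Normal_of_B_longRoot hu.1 hu.2
  · rintro s (rfl | ⟨i, rfl⟩)
    exacts [hw, hα i]

def simpleReflection (i : Fin 8) : Gamma 8 :=
  ⟨rootReflection _ (B_longRoot_self i), rootReflection_mem_Gamma _⟩

theorem simpleReflection_mem_Gamma0 (i : Fin 8) : simpleReflection i ∈ Gamma0 8 :=
  Subgroup.subset_closure ⟨i, i.2, rootReflection_apply (B_longRoot_self i)⟩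

def coxeterElement : Gamma 8 := (List.ofFn simpleReflection).prod

def longestElement : Gamma 8 := coxeterElement ^ 15

theorem longestElement_mem_Gamma0 : longestElement ∈ Gamma0 8 :=
  pow_mem ((Gamma0 8).list_prod_mem fun _ hg => by
    obtain ⟨i, rfl⟩ := List.mem_ofFn.mp hg
    exact simpleReflection_mem_Gamma0 i) 15

theorem longestElement_apply_e8Normal : longestElement.1 e8Normal = e8Normal :=
  Gamma0_le_stabilizer B_e8Normal_longRoot longestElement_mem_Gamma0

set_option maxRecDepth 40000 in
-- The Coxeter number of `E₈` is `30`, and `c ^ 15 = -1` on the root lattice.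
theorem longestElement_apply_longRoot :
    ∀ i : Fin 8, longestElement.1 (longRoot 8 i) = -longRoot 8 i := by
  decide

theorem longestElement_apply (v : LVec 8) :
    longestElement.1 v = -v - (2 * B v e8Normal) • e8Normal := by
  set ρ := longestElement.1
  have hw : B (ρ v) e8Normal = B v e8Normal := by
    rw [← longestElement.2.1 v e8Normal, longestElement_apply_e8Normal]
  have hα (i : Fin 8) : B (ρ v) (longRoot 8 i) = -B v (longRoot 8 i) := by
    rw [← longestElement.2.1 v (longRoot 8 i), longestElement_apply_longRoot, B_neg_right, neg_neg]
  have hu := eq_zero_of_B_e8Normal_of_B_longRoot (u := ρ v + v + (2 * B v e8Normal) • e8Normal)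
    (by simp only [B_add_left, B_smul_left, hw, B_e8Normal_self]; ring)
    (fun i => by
      simp only [B_add_left, B_smul_left, hα, B_e8Normal_longRoot i i.2]
      ring)
  rw [← sub_eq_zero, ← hu]
  abel

theorem longestElement_mem_GammaCong_two : longestElement ∈ GammaCong 8 2 := by
  intro v i
  rw [longestElement_apply]
  exact ⟨-v i - B v e8Normal * e8Normal i, by simp; ring⟩

theorem longestElement_ne_one : longestElement ≠ 1 := fun h => by
  have := longestElement_apply_longRoot 1
  rw [h] at this
  exact absurd this (by decide)

theorem apply_longRoot_eq_units_smul {g : Gamma 8} (hg : g ∈ Gamma0 8 ⊓ GammaCong 8 2)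
    (i : Fin 8) : ∃ δ : ℤˣ, g.1 (longRoot 8 i) = δ • longRoot 8 i := by
  have hw : g.1 e8Normal = e8Normal := Gamma0_le_stabilizer B_e8Normal_longRoot hg.1
  have hgw : B (g.1 (longRoot 8 i)) e8Normal = 0 := by
    rw [← hw, g.2.1, B_longRoot_e8Normal]
  rcases eq_or_eq_neg_of_two_dvd_sub (by rw [B_e8Normal_self]; norm_num) odd_e8Normal
      (B_longRoot_self i) (by rw [g.2.1, B_longRoot_self]) (B_longRoot_e8Normal i) hgw
      (hg.2 _) with h | h
  exacts [⟨1, by rw [h, one_smul]⟩, ⟨-1, by rw [h, Units.neg_smul, one_smul]⟩]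

theorem eq_one_or_eq_longestElement {g : Gamma 8} (hg : g ∈ Gamma0 8 ⊓ GammaCong 8 2) :
    g = 1 ∨ g = longestElement := by
  have hgw : g.1 e8Normal = e8Normal := Gamma0_le_stabilizer B_e8Normal_longRoot hg.1
  choose δ hδ using apply_longRoot_eq_units_smul hg
  -- the Dynkin diagram of `E₈` is connected, so the sign is the same on all simple roots
  have hprop (i j : Fin 8) (hij : B (longRoot 8 i) (longRoot 8 j) ≠ 0) : δ j = δ i :=
    Gamma.units_eq_of_apply_eq_smul (hδ i) (hδ j) hij
  have h2 := hprop 1 2 (by decide)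
  have h3 := hprop 2 3 (by decide)
  have h4 := hprop 3 4 (by decide)
  have h5 := hprop 4 5 (by decide)
  have h6 := hprop 5 6 (by decide)
  have h7 := hprop 6 7 (by decide)
  have h0 := hprop 3 0 (by decide)
  have hδ1 (i : Fin 8) : g.1 (longRoot 8 i) = δ 1 • longRoot 8 i := by
    rw [hδ i]; congr 1; fin_cases i <;> simp [h0, h2, h3, h4, h5, h6, h7]
  rcases Int.units_eq_one_or (δ 1) with h | h
  · exact .inl (Gamma.ext_e8 hgw fun i => by rw [hδ1, h, one_smul]; rfl)
  · refine .inr (Gamma.ext_e8 (hgw.trans longestElement_apply_e8Normal.symm) fun i => ?_)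
    rw [hδ1, h, longestElement_apply_longRoot, Units.neg_smul, one_smul]

end E8

/-- For `n = 8` the group `Γ₀` of type `E₈` generated by the reflections in the long
simple roots meets the principal congruence subgroup `Γ(2)` in a subgroup of order
exactly `2`. -/
theorem gamma0_inf_gammaCong_two_card_eq_two :
    Nat.card (Gamma0 8 ⊓ GammaCong 8 2 : Subgroup (Gamma 8)) = 2 := by
  rw [Nat.card_eq_two_iff' 1]
  refine ⟨⟨longestElement, longestElement_mem_Gamma0, longestElement_mem_GammaCong_two⟩,
    fun h => longestElement_ne_one (by simpa using congrArg Subtype.val h), ?_⟩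
  rintro ⟨g, hg⟩ hg1
  exact Subtype.ext ((eq_one_or_eq_longestElement hg).resolve_left fun h => hg1 (Subtype.ext h))
end

section
/- Let Q be ℤ^8 equipped with the positive definite symmetric bilinear form whose Gram matrix on the standard basis is the Cartan matrix of type E₈, and let w be a ℤ-linear automorphism of Q preserving this bilinear form. If w(α) ≡ α mod 2Q for every vector α ∈ Q of norm 2 (i.e. every root of E₈), then w = 1 or w = −1. -/
open scoped BigOperators

/-- The bilinear form of the `E₈` root lattice on `ℤ^8`, whose Gram matrix on the
standard basis is the Cartan matrix of type `E₈`. -/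
def BE8 (x y : Fin 8 → ℤ) : ℤ :=
  ∑ i : Fin 8, ∑ j : Fin 8, x i * CartanMatrix.E₈ i j * y j

lemma BE8_expand (x y : Fin 8 → ℤ) : BE8 x y =
    2*(x 0*y 0 + x 1*y 1 + x 2*y 2 + x 3*y 3 + x 4*y 4 + x 5*y 5 + x 6*y 6 + x 7*y 7)
    - (x 0*y 2 + x 2*y 0) - (x 1*y 3 + x 3*y 1) - (x 2*y 3 + x 3*y 2)
    - (x 3*y 4 + x 4*y 3) - (x 4*y 5 + x 5*y 4) - (x 5*y 6 + x 6*y 5)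
    - (x 6*y 7 + x 7*y 6) := by
  simp only [BE8, Fin.sum_univ_eight, show CartanMatrix.E₈ 0 0 = 2 from rfl, show CartanMatrix.E₈ 0 1 = 0 from rfl, show CartanMatrix.E₈ 0 2 = -1 from rfl, show CartanMatrix.E₈ 0 3 = 0 from rfl, show CartanMatrix.E₈ 0 4 = 0 from rfl, show CartanMatrix.E₈ 0 5 = 0 from rfl, show CartanMatrix.E₈ 0 6 = 0 from rfl, show CartanMatrix.E₈ 0 7 = 0 from rfl, show CartanMatrix.E₈ 1 0 = 0 from rfl, show CartanMatrix.E₈ 1 1 = 2 from rfl, show CartanMatrix.E₈ 1 2 = 0 from rfl, show CartanMatrix.E₈ 1 3 = -1 from rfl, show CartanMatrix.E₈ 1 4 = 0 from rfl, show CartanMatrix.E₈ 1 5 = 0 from rfl, show CartanMatrix.E₈ 1 6 = 0 from rfl, show CartanMatrix.E₈ 1 7 = 0 from rfl, show CartanMatrix.E₈ 2 0 = -1 from rfl, show CartanMatrix.E₈ 2 1 = 0 from rfl, show CartanMatrix.E₈ 2 2 = 2 from rfl, show CartanMatrix.E₈ 2 3 = -1 from rfl, show CartanMatrix.E₈ 2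 4 = 0 from rfl, show CartanMatrix.E₈ 2 5 = 0 from rfl, show CartanMatrix.E₈ 2 6 = 0 from rfl, show CartanMatrix.E₈ 2 7 = 0 from rfl, show CartanMatrix.E₈ 3 0 = 0 from rfl, show CartanMatrix.E₈ 3 1 = -1 from rfl, show CartanMatrix.E₈ 3 2 = -1 from rfl, show CartanMatrix.E₈ 3 3 = 2 from rfl, show CartanMatrix.E₈ 3 4 = -1 from rfl, show CartanMatrix.E₈ 3 5 = 0 from rfl, show CartanMatrix.E₈ 3 6 = 0 from rfl, show CartanMatrix.E₈ 3 7 = 0 from rfl, show CartanMatrix.E₈ 4 0 = 0 from rfl, show CartanMatrix.E₈ 4 1 = 0 from rfl, show CartanMatrix.E₈ 4 2 = 0 from rfl, show CartanMatrix.E₈ 4 3 = -1 from rfl, show CartanMatrix.E₈ 4 4 = 2 from rfl, show CartanMatrix.E₈ 4 5 = -1 from rfl, show CartanMatrix.E₈ 4 6 = 0 from rfl, show CartanMatrix.E₈ 4 7 = 0 from rfl, show CartanMatrix.E₈ 5 0 = 0 from rfl, show CartanMatrix.E₈ 5 1 = 0 from rfl, show CartanMatrix.E₈ 5 2 = 0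 from rfl, show CartanMatrix.E₈ 5 3 = 0 from rfl, show CartanMatrix.E₈ 5 4 = -1 from rfl, show CartanMatrix.E₈ 5 5 = 2 from rfl, show CartanMatrix.E₈ 5 6 = -1 from rfl, show CartanMatrix.E₈ 5 7 = 0 from rfl, show CartanMatrix.E₈ 6 0 = 0 from rfl, show CartanMatrix.E₈ 6 1 = 0 from rfl, show CartanMatrix.E₈ 6 2 = 0 from rfl, show CartanMatrix.E₈ 6 3 = 0 from rfl, show CartanMatrix.E₈ 6 4 = 0 from rfl, show CartanMatrix.E₈ 6 5 = -1 from rfl, show CartanMatrix.E₈ 6 6 = 2 from rfl, show CartanMatrix.E₈ 6 7 = -1 from rfl, show CartanMatrix.E₈ 7 0 = 0 from rfl, show CartanMatrix.E₈ 7 1 = 0 from rfl, show CartanMatrix.E₈ 7 2 = 0 from rfl, show CartanMatrix.E₈ 7 3 = 0 from rfl, show CartanMatrix.E₈ 7 4 = 0 from rfl, show CartanMatrix.E₈ 7 5 = 0 from rfl, show CartanMatrix.E₈ 7 6 = -1 from rfl, show CartanMatrix.E₈ 7 7 = 2 from rfl]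
  ring

lemma BE8_foursq (x : Fin 8 → ℤ) : 4 * BE8 x x = (x 0 + 2*x 1 - 2*x 2)^2 + (-x 0 + 2*x 1 + 2*x 2 - 2*x 3)^2 + (-x 0 + 2*x 3 - 2*x 4)^2 + (-x 0 + 2*x 4 - 2*x 5)^2 + (-x 0 + 2*x 5 - 2*x 6)^2 + (-x 0 + 2*x 6 - 2*x 7)^2 + (-x 0 + 2*x 7)^2 + (x 0)^2 := by
  rw [BE8_expand]; ring

lemma BE8_nonneg (x : Fin 8 → ℤ) : 0 ≤ BE8 x x := by
  have h := BE8_foursq x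
  linarith [sq_nonneg (x 0 + 2*x 1 - 2*x 2), sq_nonneg (-x 0 + 2*x 1 + 2*x 2 - 2*x 3), sq_nonneg (-x 0 + 2*x 3 - 2*x 4), sq_nonneg (-x 0 + 2*x 4 - 2*x 5), sq_nonneg (-x 0 + 2*x 5 - 2*x 6), sq_nonneg (-x 0 + 2*x 6 - 2*x 7), sq_nonneg (-x 0 + 2*x 7), sq_nonneg (x 0)]

lemma BE8_even (x : Fin 8 → ℤ) : BE8 x x = 2 * (x 0*x 0 + x 1*x 1 + x 2*x 2 + x 3*x 3 + x 4*x 4 + x 5*x 5 + x 6*x 6 + x 7*x 7 - x 0*x 2 - x 1*x 3 - x 2*x 3 - x 3*x 4 - x 4*x 5 - x 5*x 6 - x 6*x 7) := by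
  rw [BE8_expand]; ring

lemma BE8_definite (x : Fin 8 → ℤ) (h : BE8 x x = 0) : x = 0 := by
  have h4 := BE8_foursq x
  rw [h, mul_zero] at h4
  have q0 : (x 0 + 2*x 1 - 2*x 2)^2 = 0 :=
    le_antisymm (by linarith [sq_nonneg (-x 0 + 2*x 1 + 2*x 2 - 2*x 3), sq_nonneg (-x 0 + 2*x 3 - 2*x 4), sq_nonneg (-x 0 + 2*x 4 - 2*x 5), sq_nonneg (-x 0 + 2*x 5 - 2*x 6), sq_nonneg (-x 0 + 2*x 6 - 2*x 7), sq_nonneg (-x 0 + 2*x 7), sq_nonneg (x 0)]) (sq_nonneg _)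
  have l0 : (x 0 + 2*x 1 - 2*x 2) = 0 := by
    have := sq_eq_zero_iff.mp q0; linarith [this]
  have q1 : (-x 0 + 2*x 1 + 2*x 2 - 2*x 3)^2 = 0 :=
    le_antisymm (by linarith [sq_nonneg (x 0 + 2*x 1 - 2*x 2), sq_nonneg (-x 0 + 2*x 3 - 2*x 4), sq_nonneg (-x 0 + 2*x 4 - 2*x 5), sq_nonneg (-x 0 + 2*x 5 - 2*x 6), sq_nonneg (-x 0 + 2*x 6 - 2*x 7), sq_nonneg (-x 0 + 2*x 7), sq_nonneg (x 0)]) (sq_nonneg _)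
  have l1 : (-x 0 + 2*x 1 + 2*x 2 - 2*x 3) = 0 := by
    have := sq_eq_zero_iff.mp q1; linarith [this]
  have q2 : (-x 0 + 2*x 3 - 2*x 4)^2 = 0 :=
    le_antisymm (by linarith [sq_nonneg (x 0 + 2*x 1 - 2*x 2), sq_nonneg (-x 0 + 2*x 1 + 2*x 2 - 2*x 3), sq_nonneg (-x 0 + 2*x 4 - 2*x 5), sq_nonneg (-x 0 + 2*x 5 - 2*x 6), sq_nonneg (-x 0 + 2*x 6 - 2*x 7), sq_nonneg (-x 0 + 2*x 7), sq_nonneg (x 0)]) (sq_nonneg _)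
  have l2 : (-x 0 + 2*x 3 - 2*x 4) = 0 := by
    have := sq_eq_zero_iff.mp q2; linarith [this]
  have q3 : (-x 0 + 2*x 4 - 2*x 5)^2 = 0 :=
    le_antisymm (by linarith [sq_nonneg (x 0 + 2*x 1 - 2*x 2), sq_nonneg (-x 0 + 2*x 1 + 2*x 2 - 2*x 3), sq_nonneg (-x 0 + 2*x 3 - 2*x 4), sq_nonneg (-x 0 + 2*x 5 - 2*x 6), sq_nonneg (-x 0 + 2*x 6 - 2*x 7), sq_nonneg (-x 0 + 2*x 7), sq_nonneg (x 0)]) (sq_nonneg _)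
  have l3 : (-x 0 + 2*x 4 - 2*x 5) = 0 := by
    have := sq_eq_zero_iff.mp q3; linarith [this]
  have q4 : (-x 0 + 2*x 5 - 2*x 6)^2 = 0 :=
    le_antisymm (by linarith [sq_nonneg (x 0 + 2*x 1 - 2*x 2), sq_nonneg (-x 0 + 2*x 1 + 2*x 2 - 2*x 3), sq_nonneg (-x 0 + 2*x 3 - 2*x 4), sq_nonneg (-x 0 + 2*x 4 - 2*x 5), sq_nonneg (-x 0 + 2*x 6 - 2*x 7), sq_nonneg (-x 0 + 2*x 7), sq_nonneg (x 0)]) (sq_nonneg _)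
  have l4 : (-x 0 + 2*x 5 - 2*x 6) = 0 := by
    have := sq_eq_zero_iff.mp q4; linarith [this]
  have q5 : (-x 0 + 2*x 6 - 2*x 7)^2 = 0 :=
    le_antisymm (by linarith [sq_nonneg (x 0 + 2*x 1 - 2*x 2), sq_nonneg (-x 0 + 2*x 1 + 2*x 2 - 2*x 3), sq_nonneg (-x 0 + 2*x 3 - 2*x 4), sq_nonneg (-x 0 + 2*x 4 - 2*x 5), sq_nonneg (-x 0 + 2*x 5 - 2*x 6), sq_nonneg (-x 0 + 2*x 7), sq_nonneg (x 0)]) (sq_nonneg _)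
  have l5 : (-x 0 + 2*x 6 - 2*x 7) = 0 := by
    have := sq_eq_zero_iff.mp q5; linarith [this]
  have q6 : (-x 0 + 2*x 7)^2 = 0 :=
    le_antisymm (by linarith [sq_nonneg (x 0 + 2*x 1 - 2*x 2), sq_nonneg (-x 0 + 2*x 1 + 2*x 2 - 2*x 3), sq_nonneg (-x 0 + 2*x 3 - 2*x 4), sq_nonneg (-x 0 + 2*x 4 - 2*x 5), sq_nonneg (-x 0 + 2*x 5 - 2*x 6), sq_nonneg (-x 0 + 2*x 6 - 2*x 7), sq_nonneg (x 0)]) (sq_nonneg _)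
  have l6 : (-x 0 + 2*x 7) = 0 := by
    have := sq_eq_zero_iff.mp q6; linarith [this]
  have q7 : (x 0)^2 = 0 :=
    le_antisymm (by linarith [sq_nonneg (x 0 + 2*x 1 - 2*x 2), sq_nonneg (-x 0 + 2*x 1 + 2*x 2 - 2*x 3), sq_nonneg (-x 0 + 2*x 3 - 2*x 4), sq_nonneg (-x 0 + 2*x 4 - 2*x 5), sq_nonneg (-x 0 + 2*x 5 - 2*x 6), sq_nonneg (-x 0 + 2*x 6 - 2*x 7), sq_nonneg (-x 0 + 2*x 7)]) (sq_nonneg _)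
  have l7 : (x 0) = 0 := by
    have := sq_eq_zero_iff.mp q7; linarith [this]
  have c0 : x 0 = 0 := by linarith
  have c7 : x 7 = 0 := by linarith
  have c6 : x 6 = 0 := by linarith
  have c5 : x 5 = 0 := by linarith
  have c4 : x 4 = 0 := by linarith
  have c3 : x 3 = 0 := by linarith
  have c1 : x 1 = 0 := by linarith
  have c2 : x 2 = 0 := by linarith
  funext i
  fin_cases i
  · exact c0
  · exact c1
  · exact c2
  · exact c3
  · exact c4
  · exact c5
  · exact c6
  · exact c7

def eb (i : Fin 8) : Fin 8 → ℤ := fun j => if j = i then 1 else 0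

lemma eb_decomp (v : Fin 8 → ℤ) : v = ∑ i, v i • eb i := by
  funext j
  rw [Finset.sum_apply]
  simp [eb, Finset.sum_ite_eq]

/-- If a linear automorphism `w` of the `E₈` root lattice preserves the form and fixes
every root (norm `2` vector) modulo `2ℤ^8`, then `w = ±1`. -/
theorem e8_fixing_roots_mod_two_eq_pm_one (w : (Fin 8 → ℤ) ≃ₗ[ℤ] (Fin 8 → ℤ))
    (hform : ∀ x y, BE8 (w x) (w y) = BE8 x y)
    (hcong : ∀ α : Fin 8 → ℤ, BE8 α α = 2 → ∀ i, (2 : ℤ) ∣ (w α i - α i)) :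
    (∀ v, w v = v) ∨ (∀ v, w v = -v) := by
  have root_pm : ∀ x : Fin 8 → ℤ, BE8 x x = 2 → w x = x ∨ w x = -x := by
    intro x hx
    have hex : ∀ i, ∃ b : ℤ, w x i = x i + 2 * b := by
      intro i
      refine ⟨(w x i - x i) / 2, ?_⟩
      have h := Int.ediv_mul_cancel (hcong x hx i)
      linarith
    choose β hβ using hex
    have hxx := hx
    have h2 := hform x x
    rw [hx] at h2
    rw [BE8_expand] at h2 hxx
    simp only [hβ] at h2
    have key : BE8 x β + BE8 β β = 0 := by
      have key4 : 4 * BE8 x β + 4 * BE8 β β = 0 := by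
        rw [BE8_expand, BE8_expand]
        linear_combination h2 - hxx
      linarith
    have heven := BE8_even β
    have n1 := BE8_nonneg β
    have n2 := BE8_nonneg (x + β)
    have hsum : BE8 (x + β) (x + β) = BE8 x x + 2 * BE8 x β + BE8 β β := by
      simp only [BE8_expand, Pi.add_apply]; ring
    rw [hsum, hx] at n2
    have hc : BE8 x β = 0 ∨ BE8 x β = -2 := by
      set c := BE8 x β
      set b := BE8 β β
      set k := β 0*β 0 + β 1*β 1 + β 2*β 2 + β 3*β 3 + β 4*β 4 + β 5*β 5 + β 6*β 6 + β 7*β 7 - β 0*β 2 - β 1*β 3 - β 2*β 3 - β 3*β 4 - β 4*β 5 - β 5*β 6 - β 6*β 7 with hkdef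
      omega
    rcases hc with hc | hc
    · left
      have hb0 : BE8 β β = 0 := by linarith
      have : β = 0 := BE8_definite β hb0
      funext i
      rw [hβ i, this]
      simp
    · right
      have hb2 : BE8 (x + β) (x + β) = 0 := by rw [hsum, hx]; linarith
      have hxb := BE8_definite _ hb2
      funext i
      have := congrFun hxb i
      simp only [Pi.add_apply, Pi.zero_apply] at this
      rw [hβ i]
      simp only [Pi.neg_apply]
      linarith
  have heb : ∀ i, BE8 (eb i) (eb i) = 2 := by
    intro i; fin_cases i <;> simp only [BE8_expand, eb] <;> decide
  have hpm : ∀ i : Fin 8, w (eb i) = eb i ∨ w (eb i) = -(eb i) :=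
    fun i => root_pm (eb i) (heb i)
  have hneg : ∀ x y : Fin 8 → ℤ, BE8 x (-y) = -BE8 x y := by
    intro x y; simp only [BE8_expand, Pi.neg_apply]; ring
  have link : ∀ i j : Fin 8, BE8 (eb i) (eb j) = -1 →
      ((w (eb i) = eb i → w (eb j) = eb j) ∧
       (w (eb i) = -(eb i) → w (eb j) = -(eb j))) := by
    intro i j hij
    constructor
    · intro hi
      rcases hpm j with hj | hj
      · exact hj
      · exfalso
        have hf := hform (eb i) (eb j)
        rw [hi, hj, hneg, hij] at hf
        omega
    · intro hi
      rcases hpm j with hj | hj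
      · exfalso
        have hf := hform (eb i) (eb j)
        rw [hi, hj, hij] at hf
        have : BE8 (-(eb i)) (eb j) = -BE8 (eb i) (eb j) := by
          simp only [BE8_expand, Pi.neg_apply]; ring
        rw [this, hij] at hf
        omega
      · exact hj
  have a02 : BE8 (eb 0) (eb 2) = -1 := by simp only [BE8_expand, eb]; decide
  have a23 : BE8 (eb 2) (eb 3) = -1 := by simp only [BE8_expand, eb]; decide
  have a31 : BE8 (eb 3) (eb 1) = -1 := by simp only [BE8_expand, eb]; decide
  have a34 : BE8 (eb 3) (eb 4) = -1 := by simp only [BE8_expand, eb]; decide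
  have a45 : BE8 (eb 4) (eb 5) = -1 := by simp only [BE8_expand, eb]; decide
  have a56 : BE8 (eb 5) (eb 6) = -1 := by simp only [BE8_expand, eb]; decide
  have a67 : BE8 (eb 6) (eb 7) = -1 := by simp only [BE8_expand, eb]; decide
  rcases hpm 0 with h0 | h0
  · left
    have h2 := (link 0 2 a02).1 h0
    have h3 := (link 2 3 a23).1 h2
    have h1 := (link 3 1 a31).1 h3
    have h4 := (link 3 4 a34).1 h3
    have h5 := (link 4 5 a45).1 h4
    have h6 := (link 5 6 a56).1 h5
    have h7 := (link 6 7 a67).1 h6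
    have hall : ∀ i, w (eb i) = eb i := by
      intro i
      fin_cases i
      · exact h0
      · exact h1
      · exact h2
      · exact h3
      · exact h4
      · exact h5
      · exact h6
      · exact h7
    intro v
    nth_rewrite 1 [eb_decomp v]
    rw [map_sum]
    simp only [map_smul, hall]
    exact (eb_decomp v).symm
  · right
    have h2 := (link 0 2 a02).2 h0
    have h3 := (link 2 3 a23).2 h2
    have h1 := (link 3 1 a31).2 h3
    have h4 := (link 3 4 a34).2 h3
    have h5 := (link 4 5 a45).2 h4
    have h6 := (link 5 6 a56).2 h5
    have h7 := (link 6 7 a67).2 h6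
    have hall : ∀ i, w (eb i) = -(eb i) := by
      intro i
      fin_cases i
      · exact h0
      · exact h1
      · exact h2
      · exact h3
      · exact h4
      · exact h5
      · exact h6
      · exact h7
    intro v
    nth_rewrite 1 [eb_decomp v]
    rw [map_sum]
    simp only [map_smul, hall, smul_neg]
    rw [Finset.sum_neg_distrib, ← eb_decomp v]
end

section
/- Let α, β ∈ ℤ^{n,1} be roots of norm 1 with ⟨α,β⟩ = −1. Then the braid relation holds modulo 3: the element (s_α s_β s_α)(s_β s_α s_β) of Γ = O⁺(ℤ^{n,1}) lies in the principal congruence subgroup Γ(3), i.e. s_β s_α s_β ≡ s_α s_β s_α mod 3. -/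
open scoped BigOperators

/-- The braid relation modulo `3`: for norm one roots `α, β ∈ ℤ^{n,1}` with
`⟨α,β⟩ = -1`, the element `(s_α s_β s_α)(s_β s_α s_β)` of `Γ = O⁺(ℤ^{n,1})` lies in the
principal congruence subgroup `Γ(3)`, i.e. `s_β s_α s_β ≡ s_α s_β s_α mod 3`. -/
theorem braid_relation_mod_three (n : ℕ) (α β : LVec n)
    (hα : B α α = 1) (hβ : B β β = 1) (hαβ : B α β = -1) :
    (sG α hα * sG β hβ * sG α hα) * (sG β hβ * sG α hα * sG β hβ) ∈ GammaCong n 3 := by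
  have hβα : B β α = -1 := by rw [B_comm]; exact hαβ
  intro v i
  have happ : (((sG α hα * sG β hβ * sG α hα) * (sG β hβ * sG α hα * sG β hβ) : Gamma n) :
      (LVec n) ≃ₗ[ℤ] (LVec n)) v
      = srefl α hα (srefl β hβ (srefl α hα (srefl β hβ (srefl α hα (srefl β hβ v))))) := rfl
  have key : srefl α hα (srefl β hβ (srefl α hα (srefl β hβ (srefl α hα (srefl β hβ v)))))
      = v - (18 * B v α + 24 * B v β) • α - (12 * B v α + 18 * B v β) • β := by
    simp only [srefl_apply, B_sub_left, B_smul_left, hα, hβ, hαβ, hβα]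
    module
  rw [happ, key]
  refine ⟨-((6 * B v α + 8 * B v β) * α i + (4 * B v α + 6 * B v β) * β i), ?_⟩
  simp only [Pi.sub_apply, Pi.smul_apply, smul_eq_mul]
  ring
end

section
/- In ℤ^{3,1}, let r₁, r₂, r₃, r₄, r₅, r₆ be the reflections in the norm-1 roots e₁, e₂, e₃, e₀−e₁−e₂, e₀−e₂−e₃, e₀−e₁−e₃ respectively. Then the product r₁ r₄ r₂ r₅ r₃ r₆ r₃ r₅ r₂ r₄ lies in the principal congruence subgroup Γ(3) of Γ = O⁺(ℤ^{3,1}) (the 'deflation of the free hexagon' relation). -/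
open scoped BigOperators

lemma h1 : B (evec 1 : LVec 3) (evec 1) = 1 := by decide
lemma h2 : B (evec 2 : LVec 3) (evec 2) = 1 := by decide
lemma h3 : B (evec 3 : LVec 3) (evec 3) = 1 := by decide
lemma h4 : B (evec 0 - evec 1 - evec 2 : LVec 3) (evec 0 - evec 1 - evec 2) = 1 := by decide
lemma h5 : B (evec 0 - evec 2 - evec 3 : LVec 3) (evec 0 - evec 2 - evec 3) = 1 := by decide
lemma h6 : B (evec 0 - evec 1 - evec 3 : LVec 3) (evec 0 - evec 1 - evec 3) = 1 := by decide

/-- The reflections in the norm one roots `e₁, e₂, e₃, e₀-e₁-e₂, e₀-e₂-e₃, e₀-e₁-e₃`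
of `ℤ^{3,1}`. -/
def r1 : Gamma 3 := sG (evec 1) h1
def r2 : Gamma 3 := sG (evec 2) h2
def r3 : Gamma 3 := sG (evec 3) h3
def r4 : Gamma 3 := sG (evec 0 - evec 1 - evec 2) h4
def r5 : Gamma 3 := sG (evec 0 - evec 2 - evec 3) h5
def r6 : Gamma 3 := sG (evec 0 - evec 1 - evec 3) h6

/-- Deflation of the free hexagon: the product `r₁r₄r₂r₅r₃r₆r₃r₅r₂r₄` lies in the
principal congruence subgroup `Γ(3)` of `Γ = O⁺(ℤ^{3,1})`. -/
theorem free_hexagon_deflation :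
    r1 * r4 * r2 * r5 * r3 * r6 * r3 * r5 * r2 * r4 ∈ GammaCong 3 3 := by
  intro v i
  set g := ((r1 * r4 * r2 * r5 * r3 * r6 * r3 * r5 * r2 * r4 : Gamma 3) :
      LVec 3 ≃ₗ[ℤ] LVec 3) with hg
  have key : ∀ j i : Fin 4, (3:ℤ) ∣
      (g (Pi.single j 1 : LVec 3) i - (Pi.single j 1 : LVec 3) i) := by decide
  have hv : v = ∑ j : Fin 4, v j • (Pi.single j (1:ℤ) : LVec 3) := by
    funext k
    simp [Finset.sum_apply, Pi.single_apply]
  have hgv : g v = ∑ j : Fin 4, v j • g (Pi.single j (1:ℤ) : LVec 3) := by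
    conv_lhs => rw [hv]
    rw [map_sum]
    exact Finset.sum_congr rfl fun j _ => by rw [map_smul]
  have hA : g v i = ∑ j : Fin 4, v j * g (Pi.single j (1:ℤ) : LVec 3) i := by
    rw [hgv, Finset.sum_apply]
    exact Finset.sum_congr rfl fun j _ => by rw [Pi.smul_apply, smul_eq_mul]
  have hB : v i = ∑ j : Fin 4, v j * (Pi.single j (1:ℤ) : LVec 3) i := by
    conv_lhs => rw [hv]
    rw [Finset.sum_apply]
    exact Finset.sum_congr rfl fun j _ => by rw [Pi.smul_apply, smul_eq_mul]
  have hdiff : g v i - v i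
      = ∑ j : Fin 4, v j * (g (Pi.single j 1 : LVec 3) i - (Pi.single j 1 : LVec 3) i) := by
    rw [hA, hB, ← Finset.sum_sub_distrib]
    exact Finset.sum_congr rfl fun j _ => by rw [mul_sub]
  rw [hdiff]
  exact Finset.dvd_sum fun j _ => Dvd.dvd.mul_left (key j i) _
end

section
/- The automorphism group of the Petersen graph (the Kneser graph on 2-element subsets of a 5-element set, with adjacency given by disjointness) is isomorphic to the symmetric group S₅, the isomorphism being induced by the natural action of S₅ on 2-element subsets. -/
/-- The vertex set of the Petersen graph: 2-element subsets of a 5-element set. -/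
abbrev PVert : Type := {S : Finset (Fin 5) // S.card = 2}

/-- The Petersen graph: vertices are the 2-element subsets of a 5-element set,
adjacent iff disjoint. -/
def petersen : SimpleGraph PVert where
  Adj S T := S ≠ T ∧ Disjoint S.1 T.1
  symm := ⟨fun S T h => ⟨h.1.symm, h.2.symm⟩⟩
  loopless := ⟨fun S h => h.1 rfl⟩


/-!
An automorphism of the Petersen graph maps independent sets of size four to independent sets of
size four, and these are exactly the stars `{S | a ∈ S}` of the points `a`. So every automorphism
permutes the stars, that is, the points; since a vertex `S` is recovered as the set of points
whose star contains it, the automorphism acts on vertices through that permutation.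
-/

theorem SimpleGraph.IsNIndepSet.map_iso {V W : Type*} {G : SimpleGraph V} {H : SimpleGraph W}
    {n : ℕ} {s : Finset V} (h : G.IsNIndepSet n s) (f : G ≃g H) :
    H.IsNIndepSet n (s.map f.toEquiv.toEmbedding) := by
  refine ⟨?_, by rw [Finset.card_map, h.card_eq]⟩
  rw [isIndepSet_iff, Finset.coe_map]
  rintro _ ⟨v, hv, rfl⟩ _ ⟨w, hw, rfl⟩ hne hadj
  exact h.isIndepSet hv hw (ne_of_apply_ne _ hne) (f.map_adj_iff.mp hadj)

namespace Petersen

instance : DecidableRel petersen.Adj := fun S T => inferInstanceAs (Decidable (S ≠ T ∧ _))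

def star (a : Fin 5) : Finset PVert := {S | a ∈ S.1}

theorem mem_star {a : Fin 5} {S : PVert} : S ∈ star a ↔ a ∈ S.1 := by
  simp [star]

theorem star_injective : Function.Injective star := by decide

theorem isNIndepSet_star (a : Fin 5) : petersen.IsNIndepSet 4 (star a) := by
  revert a; decide

theorem exists_eq_star_of_isNIndepSet {s : Finset PVert} (hs : petersen.IsNIndepSet 4 s) :
    ∃ a, s = star a := by
  revert s; decide +kernel

theorem exists_map_star_eq (f : petersen ≃g petersen) (a : Fin 5) :
    ∃ b, (star a).map f.toEquiv.toEmbedding = star b :=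
  exists_eq_star_of_isNIndepSet ((isNIndepSet_star a).map_iso f)

def permAut (σ : Equiv.Perm (Fin 5)) : petersen ≃g petersen where
  toFun S := ⟨S.1.image σ, by rw [Finset.card_image_of_injective _ σ.injective, S.2]⟩
  invFun S := ⟨S.1.image σ.symm, by rw [Finset.card_image_of_injective _ σ.symm.injective, S.2]⟩
  left_inv S := by simp [Finset.image_image]
  right_inv S := by simp [Finset.image_image]
  map_rel_iff' := by
    simp [petersen, Finset.disjoint_image σ.injective, Subtype.ext_iff,
      (Finset.image_injective σ.injective).eq_iff]

theorem map_star_permAut (σ : Equiv.Perm (Fin 5)) (a : Fin 5) :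
    (star a).map (permAut σ).toEquiv.toEmbedding = star (σ a) := by
  ext S
  simp [star, permAut, Equiv.symm_apply_eq]

theorem eq_permAut_of_map_star (f : petersen ≃g petersen) (σ : Equiv.Perm (Fin 5))
    (h : ∀ a, (star a).map f.toEquiv.toEmbedding = star (σ a)) : f = permAut σ := by
  ext S x
  obtain ⟨a, rfl⟩ := σ.surjective x
  calc σ a ∈ (f S).1 ↔ f S ∈ (star a).map f.toEquiv.toEmbedding := by rw [h, mem_star]
    _ ↔ a ∈ S.1 := (Finset.mem_map' _).trans mem_star
    _ ↔ σ a ∈ (permAut σ S).1 := σ.injective.mem_finset_image.symm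

theorem permAut_injective : Function.Injective permAut := fun σ τ h =>
  Equiv.ext fun a => star_injective <| by rw [← map_star_permAut, h, map_star_permAut]

theorem permAut_surjective : Function.Surjective permAut := by
  intro f
  choose s hs using exists_map_star_eq f
  have hs_inj : Function.Injective s := fun a b hab =>
    star_injective <| Finset.map_injective f.toEquiv.toEmbedding <| by rw [hs, hs, hab]
  exact ⟨Equiv.ofBijective s hs_inj.bijective_of_finite,
    (eq_permAut_of_map_star f _ hs).symm⟩

end Petersen

open Petersen in
/-- The automorphism group of the Petersen graph is the symmetric group `S₅`: the
natural action of `S₅` on 2-element subsets gives a bijection (automatically a group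
isomorphism) from `S₅` onto the automorphisms of the Petersen graph. -/
theorem petersen_aut_eq_S5 :
    ∃ φ : Equiv.Perm (Fin 5) → (petersen ≃g petersen),
      Function.Bijective φ ∧
      ∀ (σ : Equiv.Perm (Fin 5)) (S : PVert), ((φ σ) S).1 = S.1.image σ :=
  ⟨permAut, ⟨permAut_injective, permAut_surjective⟩, fun _ _ => rfl⟩
end
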